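/- Let d > 0 and let x₁, …, x_N ∈ ℝ³ satisfy ‖x_j − x_k‖ ≥ 2d for all j ≠ k. Then for every index k, Σ_{j ≠ k} ‖x_k − x_j‖⁻⁴ ≤ 16 d⁻⁴. -/
import Mathlib

open MeasureTheory Metric ENNReal

/-- Packing lemma: `2d`-separated points inside a ball of radius `R` in `ℝ³`
number at most `((R+d)/d)³`. -/
lemma packing_lemma {ι : Type*} (s : Finset ι) (y : ι → EuclideanSpace ℝ (Fin 3))
    (z : EuclideanSpace ℝ (Fin 3)) (d R : ℝ) (hd : 0 < d) (hR : 0 < R)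
    (hsep : ∀ i ∈ s, ∀ j ∈ s, i ≠ j → 2 * d ≤ ‖y i - y j‖)
    (hin : ∀ i ∈ s, ‖y i - z‖ < R) :
    (s.card : ℝ) * d ^ 3 ≤ (R + d) ^ 3 := by
  have hdisj : Set.PairwiseDisjoint (↑s) (fun i => Metric.ball (y i) d) := by
    intro i hi j hj hij
    apply Metric.ball_disjoint_ball
    have := hsep i hi j hj hij
    rw [dist_eq_norm]
    linarith
  have hsub : (⋃ i ∈ s, Metric.ball (y i) d) ⊆ Metric.ball z (R + d) := by
    intro w hw
    simp only [Set.mem_iUnion] at hw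
    obtain ⟨i, hi, hwi⟩ := hw
    rw [Metric.mem_ball] at hwi ⊢
    have h1 : dist (y i) z < R := by rw [dist_eq_norm]; exact hin i hi
    calc dist w z ≤ dist w (y i) + dist (y i) z := dist_triangle _ _ _
      _ < d + R := by linarith
      _ = R + d := by ring
  have hvol : ∑ i ∈ s, volume (Metric.ball (y i) d) ≤ volume (Metric.ball z (R + d)) := by
    rw [← measure_biUnion_finset hdisj (fun i _ => measurableSet_ball)]
    exact measure_mono hsub
  have hball : ∀ c : EuclideanSpace ℝ (Fin 3), ∀ r : ℝ, volume (Metric.ball c r) =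
      ENNReal.ofReal r ^ 3 * ENNReal.ofReal
        (Real.sqrt Real.pi ^ 3 / Real.Gamma (3 / 2 + 1)) := by
    intro c r
    rw [EuclideanSpace.volume_ball]
    norm_num
  set C : ℝ≥0∞ := ENNReal.ofReal (Real.sqrt Real.pi ^ 3 / Real.Gamma (3 / 2 + 1)) with hC
  have hC0 : C ≠ 0 := by
    rw [hC]
    simp only [ne_eq, ENNReal.ofReal_eq_zero, not_le]
    apply div_pos
    · positivity
    · exact Real.Gamma_pos_of_pos (by norm_num)
  have hCt : C ≠ ⊤ := ENNReal.ofReal_ne_top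
  rw [Finset.sum_congr rfl (fun i _ => hball (y i) d), Finset.sum_const, hball] at hvol
  rw [nsmul_eq_mul, ← mul_assoc] at hvol
  rw [ENNReal.mul_le_mul_iff_left hC0 hCt] at hvol
  have : ENNReal.ofReal ((s.card : ℝ) * d ^ 3) ≤ ENNReal.ofReal ((R + d) ^ 3) := by
    rw [ENNReal.ofReal_mul (by positivity), ENNReal.ofReal_pow hd.le,
      ENNReal.ofReal_pow (by positivity), ENNReal.ofReal_natCast]
    exact hvol
  rw [ENNReal.ofReal_le_ofReal_iff (by positivity)] at this
  exact this

/-- For a `2d`-separated family of points in `ℝ³`, the inverse fourth-power sum about any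
point of the family is bounded: `Σ_{j ≠ k} ‖x_k − x_j‖⁻⁴ ≤ 16 d⁻⁴`. -/
theorem inverse_fourth_power_sum (d : ℝ) (hd : 0 < d) (N : ℕ)
    (x : Fin N → EuclideanSpace ℝ (Fin 3))
    (hsep : ∀ j k, j ≠ k → 2 * d ≤ ‖x j - x k‖) :
    ∀ k, ∑ j ∈ Finset.univ.erase k, (‖x k - x j‖ ^ 4)⁻¹ ≤ 16 / d ^ 4 := by
  intro k
  set S : Finset (Fin N) := Finset.univ.erase k with hS
  set r : Fin N → ℝ := fun j => ‖x k - x j‖ with hrdef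
  have hr2 : ∀ j ∈ S, 2 * d ≤ r j := by
    intro j hj
    exact hsep k j (Finset.ne_of_mem_erase hj).symm
  rcases S.eq_empty_or_nonempty with hSe | hSne
  · rw [hSe, Finset.sum_empty]; positivity
  -- choose M with r j < 2*d*2^M for all j ∈ S
  obtain ⟨M, hM0⟩ := pow_unbounded_of_one_lt ((S.sup' hSne r) / (2 * d)) (one_lt_two (α := ℝ))
  have hM : ∀ j ∈ S, r j < 2 * d * 2 ^ M := by
    intro j hj
    have h1 : r j ≤ S.sup' hSne r := Finset.le_sup' r hj
    have h2 : S.sup' hSne r < 2 * d * 2 ^ M := by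
      rw [div_lt_iff₀ (by positivity)] at hM0
      linarith [hM0]
    linarith
  set A : ℕ → Finset (Fin N) :=
    fun m => S.filter (fun j => 2 * d * 2 ^ m ≤ r j ∧ r j < 2 * d * 2 ^ (m + 1)) with hA
  have hSeq : S = (Finset.range M).biUnion A := by
    ext j
    simp only [Finset.mem_biUnion, Finset.mem_range, hA, Finset.mem_filter]
    constructor
    · intro hj
      have hex : ∃ m : ℕ, r j < 2 * d * 2 ^ (m + 1) := by
        refine ⟨M, lt_of_lt_of_le (hM j hj) ?_⟩
        have : (2:ℝ) ^ M ≤ 2 ^ (M + 1) := by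
          apply pow_le_pow_right₀ (by norm_num) (Nat.le_succ M)
        nlinarith
      set m := Nat.find hex with hm
      have hub : r j < 2 * d * 2 ^ (m + 1) := Nat.find_spec hex
      have hM1 : 1 ≤ M := by
        by_contra h
        push_neg at h
        interval_cases M
        have := hM j hj
        have := hr2 j hj
        norm_num at this ⊢
        linarith
      have hmM : m < M := by
        have : m ≤ M - 1 := Nat.find_le (by
          have : (M - 1) + 1 = M := Nat.succ_pred_eq_of_pos hM1
          rw [this]
          exact hM j hj)
        omega
      refine ⟨m, hmM, hj, ?_, hub⟩
      rcases Nat.eq_zero_or_pos m with h0 | h0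
      · rw [h0]
        simpa using hr2 j hj
      · have hmin := Nat.find_min hex (m := m - 1) (by omega)
        push_neg at hmin
        have : m - 1 + 1 = m := Nat.succ_pred_eq_of_pos h0
        rwa [this] at hmin
    · rintro ⟨m, _, hj, _⟩
      exact hj
  have hdisjA : Set.PairwiseDisjoint ↑(Finset.range M) A := by
    intro a _ b _ hab
    simp only [Function.onFun]
    rw [Finset.disjoint_left]
    intro j hja hjb
    simp only [hA, Finset.mem_filter] at hja hjb
    obtain ⟨_, h1a, h2a⟩ := hja
    obtain ⟨_, h1b, h2b⟩ := hjb
    have hd2 : (0:ℝ) < 2 * d := by positivity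
    rcases lt_or_gt_of_ne hab with h | h
    · have : (2:ℝ) ^ (a + 1) ≤ 2 ^ b := pow_le_pow_right₀ (by norm_num) h
      nlinarith
    · have : (2:ℝ) ^ (b + 1) ≤ 2 ^ a := pow_le_pow_right₀ (by norm_num) h
      nlinarith
  rw [hSeq, Finset.sum_biUnion hdisjA]
  have key : ∀ m ∈ Finset.range M,
      ∑ j ∈ A m, (r j ^ 4)⁻¹ ≤ 125 / (16 * d ^ 4) * (1 / 2) ^ m := by
    intro m _
    set p : ℝ := 2 ^ m with hp
    have hp0 : (0:ℝ) < p := by positivity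
    have hp1 : (1:ℝ) ≤ p := one_le_pow₀ (by norm_num : (1:ℝ) ≤ 2)
    -- each term bound
    have hterm : ∀ j ∈ A m, (r j ^ 4)⁻¹ ≤ ((2 * d * p) ^ 4)⁻¹ := by
      intro j hj
      simp only [hA, Finset.mem_filter] at hj
      have h1 : 2 * d * p ≤ r j := hj.2.1
      have h2 : (0:ℝ) < 2 * d * p := by positivity
      apply inv_anti₀ (by positivity)
      exact pow_le_pow_left₀ h2.le h1 4
    have hsum1 : ∑ j ∈ A m, (r j ^ 4)⁻¹ ≤ (A m).card • ((2 * d * p) ^ 4)⁻¹ :=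
      Finset.sum_le_card_nsmul _ _ _ hterm
    rw [nsmul_eq_mul] at hsum1
    -- card bound via packing
    have hcard : ((A m).card : ℝ) ≤ 125 * p ^ 3 := by
      have hpack := packing_lemma (A m) x (x k) d (2 * d * 2 ^ (m + 1)) hd (by positivity)
        (fun i hi j hj hij => hsep i j hij)
        (by
          intro i hi
          simp only [hA, Finset.mem_filter] at hi
          rw [← norm_sub_rev]
          exact hi.2.2)
      have hexp : (2:ℝ) ^ (m + 1) = 2 * p := by rw [pow_succ]; ring
      rw [hexp] at hpack
      have hle : (2 * d * (2 * p) + d) ^ 3 ≤ (5 * d * p) ^ 3 := by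
        apply pow_le_pow_left₀ (by positivity)
        nlinarith [mul_le_mul_of_nonneg_left hp1 hd.le]
      have h5 : ((5:ℝ) * d * p) ^ 3 = 125 * p ^ 3 * d ^ 3 := by ring
      nlinarith [pow_pos hd 3]
    have heq : (125:ℝ) / (16 * d ^ 4) * (1 / 2) ^ m =
        125 * p ^ 3 * ((2 * d * p) ^ 4)⁻¹ := by
      have h12 : ((1:ℝ) / 2) ^ m = p⁻¹ := by
        rw [one_div, inv_pow]
      rw [h12]
      field_simp
      ring
    rw [heq]
    calc ∑ j ∈ A m, (r j ^ 4)⁻¹ ≤ ((A m).card : ℝ) * ((2 * d * p) ^ 4)⁻¹ := hsum1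
      _ ≤ 125 * p ^ 3 * ((2 * d * p) ^ 4)⁻¹ := by
          apply mul_le_mul_of_nonneg_right hcard (by positivity)
  calc ∑ m ∈ Finset.range M, ∑ j ∈ A m, (r j ^ 4)⁻¹
      ≤ ∑ m ∈ Finset.range M, 125 / (16 * d ^ 4) * (1 / 2) ^ m :=
        Finset.sum_le_sum key
    _ = 125 / (16 * d ^ 4) * ∑ m ∈ Finset.range M, (1 / 2 : ℝ) ^ m := by
        rw [Finset.mul_sum]
    _ ≤ 125 / (16 * d ^ 4) * 2 := by
        apply mul_le_mul_of_nonneg_left (sum_geometric_two_le M) (by positivity)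
    _ ≤ 16 / d ^ 4 := by
        rw [div_mul_eq_mul_div, div_le_div_iff₀ (by positivity) (by positivity)]
        nlinarith [pow_pos hd 4]
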